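/- Let Z_1, Z_2, ... be i.i.d. standard normal random variables, n > 0, 1 ≤ a ≤ n/e, and U_n(a) = Σ_{i≥1} Z_i^2/(a·e^{i/a} + n). Then Var(n·U_n(a)/(a·log(n/a))) ≤ K_1/(a·log(n/a)) for a universal constant K_1 > 0. -/

import Mathlib

/-! The summands `c_i Z_i²`, `c_i = (a e^{i/a} + n)⁻¹`, are independent, so Fatou's lemma along
the partial sums bounds the variance of the series by `Var(Z²) Σ c_i²`. Using `c_i ≤ 1/n` for
the first `⌈a log(n/a)⌉` indices and `c_i ≤ e^{-i/a}/a` beyond them gives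
`Σ c_i ≤ 3 a log(n/a) / n`, hence `Σ c_i² ≤ 3 a log(n/a) / n²`; scaling by
`(n / (a log(n/a)))²` yields the claim with `K₁ = 3 Var(Z²) + 1`. -/

open MeasureTheory ProbabilityTheory Filter Topology Real

theorem tsum_le_of_le_of_le_geometric {c : ℕ → ℝ} {b C ρ : ℝ} (hc : ∀ i, 0 ≤ c i)
    (hb : ∀ i, c i ≤ b) (hgeom : ∀ i, c i ≤ C * ρ ^ i) (hρ0 : 0 ≤ ρ) (hρ1 : ρ < 1)
    (N : ℕ) :
    ∑' i, c i ≤ N * b + C * ρ ^ N / (1 - ρ) := by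
  have hρsum := summable_geometric_of_lt_one hρ0 hρ1
  have hcsum : Summable c := hρsum.mul_left C |>.of_nonneg_of_le hc hgeom
  rw [← hcsum.sum_add_tsum_nat_add N]
  gcongr
  · simpa using Finset.sum_le_card_nsmul (Finset.range N) c b fun i _ => hb i
  · calc ∑' i, c (i + N) ≤ ∑' i, C * ρ ^ N * ρ ^ i :=
          ((summable_nat_add_iff N).mpr hcsum).tsum_le_tsum
            (fun i => (hgeom _).trans_eq (by ring)) (hρsum.mul_left _)
      _ = C * ρ ^ N / (1 - ρ) := by
          rw [tsum_mul_left, tsum_geometric_of_lt_one hρ0 hρ1, div_eq_mul_inv]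

theorem exp_neg_div_one_sub_exp_neg_le {x : ℝ} (hx : 0 < x) :
    exp (-x) / (1 - exp (-x)) ≤ x⁻¹ := by
  have hexp : x ≤ exp x - 1 := by linarith [add_one_le_exp x]
  calc exp (-x) / (1 - exp (-x)) = (exp x - 1)⁻¹ := by
        rw [exp_neg]; field_simp
    _ ≤ x⁻¹ := inv_anti₀ hx hexp

/-- The coefficient of `Z_{i+1}²` in `U_n(a)`: indices are shifted to start at `0`. -/
noncomputable def expWeight (a n : ℝ) (i : ℕ) : ℝ := (a * exp ((i + 1) / a) + n)⁻¹

section expWeight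

variable {a n : ℝ}

theorem expWeight_pos (ha : 0 < a) (hn : 0 ≤ n) (i : ℕ) : 0 < expWeight a n i := by
  unfold expWeight; positivity

theorem expWeight_le_inv (ha : 0 < a) (hn : 0 < n) (i : ℕ) : expWeight a n i ≤ n⁻¹ :=
  inv_anti₀ hn (by linarith [mul_pos ha (exp_pos ((i + 1) / a))])

theorem expWeight_le_geometric (ha : 0 < a) (hn : 0 ≤ n) (i : ℕ) :
    expWeight a n i ≤ a⁻¹ * exp (-a⁻¹) * exp (-a⁻¹) ^ i := by
  calc expWeight a n i ≤ (a * exp ((i + 1) / a))⁻¹ := inv_anti₀ (by positivity) (by linarith)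
    _ = a⁻¹ * exp (-a⁻¹) * exp (-a⁻¹) ^ i := by
        rw [← exp_nat_mul, mul_assoc, ← exp_add, mul_inv, ← exp_neg]
        congr 2; ring

theorem summable_expWeight (ha : 0 < a) (hn : 0 ≤ n) : Summable (expWeight a n) :=
  (summable_geometric_of_lt_one (exp_pos _).le (exp_lt_one_iff.mpr (by simpa using ha))).mul_left _
    |>.of_nonneg_of_le (fun i => (expWeight_pos ha hn i).le) (expWeight_le_geometric ha hn)

theorem exp_neg_inv_pow_ceil_le (ha : 0 < a) (hn : 0 < n) :
    exp (-a⁻¹) ^ ⌈a * log (n / a)⌉₊ ≤ a / n := by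
  calc exp (-a⁻¹) ^ ⌈a * log (n / a)⌉₊ = exp (-(⌈a * log (n / a)⌉₊ / a)) := by
        rw [← exp_nat_mul]; ring_nf
    _ ≤ exp (-log (n / a)) :=
        exp_le_exp.mpr <| neg_le_neg <| (le_div_iff₀ ha).mpr <| by
          linarith [Nat.le_ceil (a * log (n / a))]
    _ = a / n := by rw [exp_neg, exp_log (by positivity), inv_div]

theorem tsum_expWeight_le (ha : 0 < a) (han : a ≤ n) :
    ∑' i, expWeight a n i ≤ (a * log (n / a) + 1 + a) / n := by
  have hn : 0 < n := ha.trans_le han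
  set N := ⌈a * log (n / a)⌉₊
  have hL : 0 ≤ log (n / a) := log_nonneg ((one_le_div ha).mpr han)
  have hN : (N : ℝ) ≤ a * log (n / a) + 1 := (Nat.ceil_lt_add_one (by positivity)).le
  have hr1 : exp (-a⁻¹) < 1 := exp_lt_one_iff.mpr (by simpa using ha)
  calc ∑' i, expWeight a n i
      ≤ N * n⁻¹ + a⁻¹ * exp (-a⁻¹) * exp (-a⁻¹) ^ N / (1 - exp (-a⁻¹)) :=
        tsum_le_of_le_of_le_geometric (fun i => (expWeight_pos ha hn.le i).le)
          (expWeight_le_inv ha hn) (expWeight_le_geometric ha hn.le) (exp_pos _).le hr1 N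
    _ = N * n⁻¹ + a⁻¹ * exp (-a⁻¹) ^ N * (exp (-a⁻¹) / (1 - exp (-a⁻¹))) := by ring
    _ ≤ (a * log (n / a) + 1) * n⁻¹ + a⁻¹ * (a / n) * a := by
        gcongr
        · exact exp_neg_inv_pow_ceil_le ha hn
        · simpa using exp_neg_div_one_sub_exp_neg_le (inv_pos.mpr ha)
    _ = (a * log (n / a) + 1 + a) / n := by field_simp

theorem pos_of_le_div_exp (ha : 0 < a) (han : a ≤ n / exp 1) : 0 < n :=
  (div_pos_iff_of_pos_right (exp_pos 1)).mp (ha.trans_le han)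

theorem one_le_log_div_of_le_div_exp (ha : 0 < a) (han : a ≤ n / exp 1) : 1 ≤ log (n / a) := by
  have hn := pos_of_le_div_exp ha han
  rw [le_div_iff₀ (exp_pos 1), ← le_div_iff₀' ha] at han
  exact (le_log_iff_exp_le (by positivity)).mpr han

theorem expWeight_sq_le (ha : 0 < a) (hn : 0 < n) (i : ℕ) :
    expWeight a n i ^ 2 ≤ n⁻¹ * expWeight a n i := by
  rw [sq]
  exact mul_le_mul_of_nonneg_right (expWeight_le_inv ha hn i) (expWeight_pos ha hn.le i).le

theorem summable_expWeight_sq (ha : 0 < a) (hn : 0 < n) :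
    Summable fun i => expWeight a n i ^ 2 :=
  ((summable_expWeight ha hn.le).mul_left n⁻¹).of_nonneg_of_le (fun _ => sq_nonneg _)
    (expWeight_sq_le ha hn)

theorem tsum_expWeight_sq_le (ha : 1 ≤ a) (han : a ≤ n / exp 1) :
    ∑' i, expWeight a n i ^ 2 ≤ 3 * a * log (n / a) / n ^ 2 := by
  have ha0 : 0 < a := one_pos.trans_le ha
  have hn := pos_of_le_div_exp ha0 han
  have hL := one_le_log_div_of_le_div_exp ha0 han
  calc ∑' i, expWeight a n i ^ 2 ≤ ∑' i, n⁻¹ * expWeight a n i :=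
        (summable_expWeight_sq ha0 hn).tsum_le_tsum (expWeight_sq_le ha0 hn)
          ((summable_expWeight ha0 hn.le).mul_left n⁻¹)
    _ = n⁻¹ * ∑' i, expWeight a n i := tsum_mul_left
    _ ≤ n⁻¹ * ((a * log (n / a) + 1 + a) / n) := by
        gcongr
        exact tsum_expWeight_le ha0 (han.trans (div_le_self hn.le (one_le_exp zero_le_one)))
    _ ≤ 3 * a * log (n / a) / n ^ 2 := by
        rw [← mul_div_assoc, inv_mul_eq_div, div_div, ← sq]
        gcongr
        nlinarith

end expWeight

theorem variance_tsum_le_tsum_variance {Ω : Type*} [MeasurableSpace Ω] {μ : Measure Ω}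
    [IsProbabilityMeasure μ] {X : ℕ → Ω → ℝ} (hX : ∀ i, MemLp (X i) 2 μ)
    (hindep : Pairwise fun i j => IndepFun (X i) (X j) μ)
    (hnorm : Summable fun i => ∫ ω, ‖X i ω‖ ∂μ) (hvar : Summable fun i => Var[X i; μ]) :
    Var[fun ω => ∑' i, X i ω; μ] ≤ ∑' i, Var[X i; μ] := by
  set T : ℕ → Ω → ℝ := fun N => ∑ i ∈ Finset.range N, X i
  have hint : ∀ i, Integrable (X i) μ := fun i => (hX i).integrable one_le_two
  have hmean : HasSum (fun i => μ[X i]) μ[fun ω => ∑' i, X i ω] :=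
    hasSum_integral_of_summable_integral_norm hint hnorm
  have hmeanT : ∀ N, μ[T N] = ∑ i ∈ Finset.range N, μ[X i] := fun N => by
    simp only [T, Finset.sum_apply]
    exact integral_finsetSum _ fun i _ => hint i
  have hsum : ∀ᵐ ω ∂μ, Summable fun i => X i ω := by
    refine (summable_norm_of_tsum_eLpNorm_ne_top le_rfl (fun i => (hX i).1) ?_).mono
      fun ω h => h.of_norm
    simp_rw [eLpNorm_one_eq_lintegral_enorm, ← ofReal_integral_norm_eq_lintegral_enorm (hint _)]
    rw [← ENNReal.ofReal_tsum_of_nonneg (fun i => integral_nonneg fun ω => norm_nonneg _) hnorm]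
    exact ENNReal.ofReal_ne_top
  have hlim : ∀ᵐ ω ∂μ, Tendsto (fun N => ‖T N ω - μ[T N]‖ₑ ^ 2) atTop
      (𝓝 (‖(∑' i, X i ω) - μ[fun ω => ∑' i, X i ω]‖ₑ ^ 2)) := by
    filter_upwards [hsum] with ω hω
    have hT : Tendsto (fun N => T N ω - μ[T N]) atTop
        (𝓝 ((∑' i, X i ω) - μ[fun ω => ∑' i, X i ω])) := by
      simp only [hmeanT]
      simp only [T, Finset.sum_apply]
      exact hω.hasSum.tendsto_sum_nat.sub hmean.tendsto_sum_nat
    exact ((ENNReal.continuous_pow 2).tendsto _).comp ((continuous_enorm.tendsto _).comp hT)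
  have hvarT : ∀ N, eVar[T N; μ] ≤ ENNReal.ofReal (∑' i, Var[X i; μ]) := fun N => by
    rw [← ofReal_variance (memLp_finsetSum' _ fun i _ => hX i),
      IndepFun.variance_sum (fun i _ => hX i) fun i _ j _ hij => hindep hij]
    exact ENNReal.ofReal_le_ofReal
      (hvar.sum_le_tsum _ fun i _ => variance_nonneg _ _)
  refine ENNReal.toReal_le_of_le_ofReal (tsum_nonneg fun i => variance_nonneg _ _) ?_
  calc eVar[fun ω => ∑' i, X i ω; μ]
      = ∫⁻ ω, liminf (fun N => ‖T N ω - μ[T N]‖ₑ ^ 2) atTop ∂μ :=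
        lintegral_congr_ae (hlim.mono fun ω h => h.liminf_eq.symm)
    _ ≤ liminf (fun N => eVar[T N; μ]) atTop :=
        lintegral_liminf_le' fun N =>
          (((memLp_finsetSum' _ fun i _ => hX i).1.aemeasurable.sub_const _).enorm.pow_const 2)
    _ ≤ ENNReal.ofReal (∑' i, Var[X i; μ]) :=
        liminf_le_of_frequently_le' (Frequently.of_forall hvarT)

theorem variance_tsum_mul_comp_le {Ω : Type*} [MeasurableSpace Ω] {μ : Measure Ω}
    [IsProbabilityMeasure μ] {ν : Measure ℝ} {Z : ℕ → Ω → ℝ}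
    (hZ : ∀ i, Measurable (Z i)) (hindep : iIndepFun Z μ) (hlaw : ∀ i, μ.map (Z i) = ν)
    {g : ℝ → ℝ} (hg : Measurable g) (hg2 : MemLp g 2 ν) {c : ℕ → ℝ} (hc : Summable c)
    (hc2 : Summable fun i => c i ^ 2) :
    Var[fun ω => ∑' i, c i * g (Z i ω); μ] ≤ Var[g; ν] * ∑' i, c i ^ 2 := by
  have hgZ : ∀ i, MemLp (fun ω => g (Z i ω)) 2 μ := fun i =>
    (memLp_map_measure_iff hg.aestronglyMeasurable (hZ i).aemeasurable).mp (hlaw i ▸ hg2)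
  have hvar : ∀ i, Var[fun ω => c i * g (Z i ω); μ] = c i ^ 2 * Var[g; ν] := fun i => by
    rw [variance_const_mul, ← hlaw i, variance_map hg.aemeasurable (hZ i).aemeasurable]
    rfl
  have hnorm (i : ℕ) : ∫ ω, ‖c i * g (Z i ω)‖ ∂μ = |c i| * ∫ x, ‖g x‖ ∂ν := by
    simp only [norm_mul, Real.norm_eq_abs (c i), integral_const_mul, ← hlaw i]
    rw [integral_map (hZ i).aemeasurable hg.norm.aestronglyMeasurable]
  calc Var[fun ω => ∑' i, c i * g (Z i ω); μ]
      ≤ ∑' i, Var[fun ω => c i * g (Z i ω); μ] :=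
        variance_tsum_le_tsum_variance (fun i => (hgZ i).const_mul (c i))
          (fun i j hij => (hindep.indepFun hij).comp (hg.const_mul (c i)) (hg.const_mul (c j)))
          (by simpa only [hnorm] using hc.abs.mul_right _)
          (by simpa only [hvar] using hc2.mul_right _)
    _ = Var[g; ν] * ∑' i, c i ^ 2 := by
        simp only [hvar, mul_comm _ (Var[g; ν]), tsum_mul_left]

theorem memLp_sq_gaussianReal {m : ℝ} {v : NNReal} :
    MemLp (fun x : ℝ => x ^ 2) 2 (gaussianReal m v) := by
  rw [memLp_two_iff_integrable_sq (by fun_prop)]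
  simpa [← pow_mul, Even.pow_abs (by decide : Even 4)] using
    (memLp_id_gaussianReal 4).integrable_norm_pow (by norm_num)

/-- For `Z_i` i.i.d. standard normal, `1 ≤ a ≤ n/e`, and
`U_n(a) = Σ_{i≥1} Z_i²/(a e^{i/a}+n)`:
`Var(n·U_n(a)/(a·log(n/a))) ≤ K₁/(a·log(n/a))` for a universal constant `K₁ > 0`. -/
theorem stmt10 :
    ∃ K₁ : ℝ, 0 < K₁ ∧
      ∀ (Ω : Type) [MeasurableSpace Ω] (μ : Measure Ω) [IsProbabilityMeasure μ]
        (Z : ℕ → Ω → ℝ), (∀ i, Measurable (Z i)) →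
        iIndepFun Z μ →
        (∀ i, Measure.map (Z i) μ = gaussianReal 0 1) →
        ∀ n a : ℝ, 1 ≤ a → a ≤ n / Real.exp 1 →
        variance (fun ω =>
            n * (∑' i : ℕ, (Z i ω) ^ 2 / (a * Real.exp (((i : ℝ) + 1) / a) + n)) /
              (a * Real.log (n / a))) μ ≤
          K₁ / (a * Real.log (n / a)) := by
  set V := Var[fun x => x ^ 2; gaussianReal 0 1]
  have hV : 0 ≤ V := variance_nonneg _ _
  refine ⟨3 * V + 1, by linarith, ?_⟩
  intro Ω _ μ _ Z hZ hindep hlaw n a ha han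
  have ha0 : 0 < a := one_pos.trans_le ha
  have hn := pos_of_le_div_exp ha0 han
  have haL : 0 < a * log (n / a) :=
    mul_pos ha0 (one_pos.trans_le (one_le_log_div_of_le_div_exp ha0 han))
  have hU := variance_tsum_mul_comp_le hZ hindep hlaw (by fun_prop) memLp_sq_gaussianReal
    (summable_expWeight ha0 hn.le) (summable_expWeight_sq ha0 hn)
  have hX : (fun ω => n * (∑' i : ℕ, Z i ω ^ 2 / (a * exp ((i + 1) / a) + n)) /
      (a * log (n / a))) = fun ω => n / (a * log (n / a)) * ∑' i, expWeight a n i * Z i ω ^ 2 := by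
    funext ω; simp only [expWeight, div_eq_inv_mul]; ring
  rw [hX, variance_const_mul]
  calc (n / (a * log (n / a))) ^ 2 * Var[fun ω => ∑' i, expWeight a n i * Z i ω ^ 2; μ]
      ≤ (n / (a * log (n / a))) ^ 2 * (V * (3 * a * log (n / a) / n ^ 2)) := by
        gcongr
        exact hU.trans (mul_le_mul_of_nonneg_left (tsum_expWeight_sq_le ha han) hV)
    _ = 3 * V / (a * log (n / a)) := by field_simp
    _ ≤ (3 * V + 1) / (a * log (n / a)) := by gcongr; linarith
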